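/- arXiv:1109.0225 — 2 statements merged into one kernel-verified Lean document; each statement's English description precedes it below -/
import Mathlib

section
/- Let Λ₁, Λ₂ be finite nonempty sets and P_{(s₁,s₂)} probability distributions on Λ₁ × Λ₂ for s₁ ∈ {1,…,S₁}, s₂ ∈ {1,…,S₂} satisfying the nonsignaling (consistency) condition as above, with one-party marginals P_{s₁} and P_{s₂}. Define μ on Λ₁^{S₁} × Λ₂^{S₂} by μ(λ₁^{(1)},…,λ₁^{(S₁)}, λ₂^{(1)},…,λ₂^{(S₂)}) = ∑_{s₁,s₂} [ P_{(s₁,s₂)}(λ₁^{(s₁)}, λ₂^{(s₂)}) · ∏_{t₁≠s₁} P_{t₁}(λ₁^{(t₁)}) · ∏_{t₂≠s₂} P_{t₂}(λ₂^{(t₂)}) ] − (S₁S₂ − 1) ∏_{s₁} P_{s₁}(λ₁^{(s₁)}) ∏_{s₂} P_{s₂}(λ₂^{(s₂)}). Then μ sums to 1 over all tuples, and for every pair (s₁,s₂) the marginal of μ on coordinates (s₁, s₂) equals P_{(s₁,s₂)}. -/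
/-!
Each summand of `muB` indexed by `(t₁, t₂)` is the law that draws `(ω.1 t₁, ω.2 t₂)` from
`P t₁ t₂` and every other coordinate independently from its one-party marginal. By
nonsignaling, its marginal on `(s₁, s₂)` is `P s₁ s₂` if `(t₁, t₂) = (s₁, s₂)` and the product
`Q₁ s₁ ⊗ Q₂ s₂` otherwise; the subtracted product law has the same product marginal, so the
`S₁ S₂ - 1` surplus copies cancel. Normalization follows by summing one marginal.
-/

open Finset

/-- The explicit bipartite master signed measure of Eq. (B3) of Loubenets. -/
def muB {Λ₁ Λ₂ : Type*} [Fintype Λ₁] [Fintype Λ₂] {S₁ S₂ : ℕ}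
    (P : Fin S₁ → Fin S₂ → Λ₁ → Λ₂ → ℝ)
    (Q₁ : Fin S₁ → Λ₁ → ℝ) (Q₂ : Fin S₂ → Λ₂ → ℝ)
    (ω : (Fin S₁ → Λ₁) × (Fin S₂ → Λ₂)) : ℝ :=
  (∑ s₁, ∑ s₂, P s₁ s₂ (ω.1 s₁) (ω.2 s₂)
      * (∏ t₁ ∈ Finset.univ.erase s₁, Q₁ t₁ (ω.1 t₁))
      * (∏ t₂ ∈ Finset.univ.erase s₂, Q₂ t₂ (ω.2 t₂)))
    - ((S₁ : ℝ) * (S₂ : ℝ) - 1) * (∏ s₁, Q₁ s₁ (ω.1 s₁)) * (∏ s₂, Q₂ s₂ (ω.2 s₂))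

section OneParty

variable {ι Λ R : Type*} [Fintype ι] [DecidableEq ι] [Fintype Λ] [DecidableEq Λ]
  [CommSemiring R]

theorem sum_filter_apply_eq_prod (w : ι → Λ → R) (s : ι) (a : Λ) :
    ∑ f ∈ univ.filter (fun f : ι → Λ => f s = a), ∏ u, w u (f u)
      = w s a * ∏ u ∈ univ.erase s, ∑ x, w u x := by
  rw [← Fintype.piFinset_univ, ← Fintype.piFinset_update_singleton_eq_filter_piFinset_eq
    (fun _ => (univ : Finset Λ)) s (mem_univ a), ← prod_univ_sum,
    ← mul_prod_erase univ _ (mem_univ s)]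
  simp only [Function.update_self, sum_singleton]
  congr 1
  exact prod_congr rfl fun u hu => by rw [Function.update_of_ne (ne_of_mem_erase hu)]

variable {w : ι → Λ → R} (hw : ∀ u, ∑ x, w u x = 1)
include hw

theorem sum_filter_apply_eq_prod_of_sum_eq_one (s : ι) (a : Λ) :
    ∑ f ∈ univ.filter (fun f : ι → Λ => f s = a), ∏ u, w u (f u) = w s a := by
  rw [sum_filter_apply_eq_prod, prod_eq_one fun u _ => hw u, mul_one]

theorem sum_filter_apply_mul_prod_erase (c : Λ → R) (s t : ι) (a : Λ) :
    ∑ f ∈ univ.filter (fun f : ι → Λ => f s = a), c (f t) * ∏ u ∈ univ.erase t, w u (f u)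
      = if t = s then c a else (∑ x, c x) * w s a := by
  have hupdate : ∀ f : ι → Λ, c (f t) * ∏ u ∈ univ.erase t, w u (f u)
      = ∏ u, Function.update w t c u (f u) := fun f => by
    rw [← mul_prod_erase univ _ (mem_univ t), Function.update_self]
    exact congrArg _ <| prod_congr rfl fun u hu => by
      rw [Function.update_of_ne (ne_of_mem_erase hu)]
  simp only [hupdate, sum_filter_apply_eq_prod]
  split_ifs with hts
  · subst hts
    rw [Function.update_self, prod_eq_one fun u hu => by
      rw [Function.update_of_ne (ne_of_mem_erase hu), hw], mul_one]
  · rw [Function.update_of_ne (Ne.symm hts), mul_comm,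
      prod_eq_single_of_mem t (mem_erase.2 ⟨hts, mem_univ t⟩) fun u _ hut => by
        rw [Function.update_of_ne hut, hw], Function.update_self]

end OneParty

theorem sum_filter_fst_and_snd {α β M : Type*} [Fintype α] [Fintype β] [AddCommMonoid M]
    (p : α → Prop) (q : β → Prop) [DecidablePred p] [DecidablePred q] (F : α × β → M) :
    ∑ ω ∈ univ.filter (fun ω : α × β => p ω.1 ∧ q ω.2), F ω
      = ∑ f ∈ univ.filter p, ∑ g ∈ univ.filter q, F (f, g) := by
  rw [← univ_product_univ, filter_product, sum_product]

theorem sum_sum_ite_eq_and_eq {ι₁ ι₂ R : Type*} [Fintype ι₁] [Fintype ι₂] [DecidableEq ι₁]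
    [DecidableEq ι₂] [CommRing R] (s₁ : ι₁) (s₂ : ι₂) (x : ι₁ → ι₂ → R) (y : R) :
    ∑ t₁, ∑ t₂, (if t₁ = s₁ ∧ t₂ = s₂ then x t₁ t₂ else y)
      = x s₁ s₂ + ((Fintype.card ι₁ : R) * Fintype.card ι₂ - 1) * y := by
  have hsplit : ∀ (t₁ : ι₁) (t₂ : ι₂), (if t₁ = s₁ ∧ t₂ = s₂ then x t₁ t₂ else y)
      = y + if t₂ = s₂ then (if t₁ = s₁ then x t₁ t₂ - y else 0) else 0 := fun t₁ t₂ => by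
    split_ifs <;> simp_all
  simp only [hsplit, sum_add_distrib, sum_const, card_univ, Fintype.sum_ite_eq', nsmul_eq_mul]
  ring

section TwoParty

variable {ι₁ ι₂ Λ₁ Λ₂ R : Type*} [Fintype ι₁] [DecidableEq ι₁] [Fintype ι₂] [DecidableEq ι₂]
  [Fintype Λ₁] [DecidableEq Λ₁] [Fintype Λ₂] [DecidableEq Λ₂] [CommSemiring R]
  {Q₁ : ι₁ → Λ₁ → R} {Q₂ : ι₂ → Λ₂ → R}
  (hQ₁ : ∀ u, ∑ x, Q₁ u x = 1) (hQ₂ : ∀ v, ∑ y, Q₂ v y = 1)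
include hQ₁ hQ₂

theorem sum_filter_prod_mul_prod (s₁ : ι₁) (s₂ : ι₂) (a : Λ₁) (b : Λ₂) :
    ∑ ω ∈ univ.filter (fun ω : (ι₁ → Λ₁) × (ι₂ → Λ₂) => ω.1 s₁ = a ∧ ω.2 s₂ = b),
      (∏ u, Q₁ u (ω.1 u)) * ∏ v, Q₂ v (ω.2 v) = Q₁ s₁ a * Q₂ s₂ b := by
  rw [sum_filter_fst_and_snd (fun f : ι₁ → Λ₁ => f s₁ = a) (fun g : ι₂ → Λ₂ => g s₂ = b)]
  dsimp only
  rw [← sum_mul_sum, sum_filter_apply_eq_prod_of_sum_eq_one hQ₁,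
    sum_filter_apply_eq_prod_of_sum_eq_one hQ₂]

theorem sum_filter_mul_prod_erase_mul_prod_erase {t₁ : ι₁} {t₂ : ι₂} {p : Λ₁ → Λ₂ → R}
    (hp₁ : ∀ x, ∑ y, p x y = Q₁ t₁ x) (hp₂ : ∀ y, ∑ x, p x y = Q₂ t₂ y)
    (s₁ : ι₁) (s₂ : ι₂) (a : Λ₁) (b : Λ₂) :
    ∑ ω ∈ univ.filter (fun ω : (ι₁ → Λ₁) × (ι₂ → Λ₂) => ω.1 s₁ = a ∧ ω.2 s₂ = b),
      p (ω.1 t₁) (ω.2 t₂) * (∏ u ∈ univ.erase t₁, Q₁ u (ω.1 u))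
        * (∏ v ∈ univ.erase t₂, Q₂ v (ω.2 v))
      = if t₁ = s₁ ∧ t₂ = s₂ then p a b else Q₁ s₁ a * Q₂ s₂ b := by
  rw [sum_filter_fst_and_snd (fun f : ι₁ → Λ₁ => f s₁ = a) (fun g : ι₂ → Λ₂ => g s₂ = b)]
  dsimp only
  have hinner : ∀ f : ι₁ → Λ₁,
      ∑ g ∈ univ.filter (fun g : ι₂ → Λ₂ => g s₂ = b),
        p (f t₁) (g t₂) * (∏ u ∈ univ.erase t₁, Q₁ u (f u)) * (∏ v ∈ univ.erase t₂, Q₂ v (g v))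
      = (if t₂ = s₂ then p (f t₁) b else Q₁ t₁ (f t₁) * Q₂ s₂ b)
          * ∏ u ∈ univ.erase t₁, Q₁ u (f u) := fun f => by
    simp_rw [mul_right_comm _ (∏ u ∈ univ.erase t₁, Q₁ u (f u)), ← sum_mul,
      sum_filter_apply_mul_prod_erase hQ₂, hp₁]
  simp_rw [hinner]
  by_cases ht₂ : t₂ = s₂
  · simp only [ht₂, if_true, and_true]
    rw [sum_filter_apply_mul_prod_erase hQ₁ (fun x => p x b), hp₂, ht₂, mul_comm]
  · simp only [ht₂, if_false, and_false, mul_right_comm _ (Q₂ s₂ b), ← sum_mul,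
      mul_prod_erase univ (fun u => Q₁ u _) (mem_univ t₁),
      sum_filter_apply_eq_prod_of_sum_eq_one hQ₁]

end TwoParty

theorem sum_filter_muB {Λ₁ Λ₂ : Type*} [Fintype Λ₁] [Fintype Λ₂] [DecidableEq Λ₁]
    [DecidableEq Λ₂] {S₁ S₂ : ℕ} {P : Fin S₁ → Fin S₂ → Λ₁ → Λ₂ → ℝ}
    {Q₁ : Fin S₁ → Λ₁ → ℝ} {Q₂ : Fin S₂ → Λ₂ → ℝ}
    (hQ₁ : ∀ t, ∑ x, Q₁ t x = 1) (hQ₂ : ∀ t, ∑ y, Q₂ t y = 1)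
    (hmarg1 : ∀ s₁ s₂ a, ∑ b, P s₁ s₂ a b = Q₁ s₁ a)
    (hmarg2 : ∀ s₁ s₂ b, ∑ a, P s₁ s₂ a b = Q₂ s₂ b)
    (s₁ : Fin S₁) (s₂ : Fin S₂) (a : Λ₁) (b : Λ₂) :
    ∑ ω ∈ univ.filter (fun ω : (Fin S₁ → Λ₁) × (Fin S₂ → Λ₂) => ω.1 s₁ = a ∧ ω.2 s₂ = b),
      muB P Q₁ Q₂ ω = P s₁ s₂ a b := by
  simp only [muB, sum_sub_distrib, mul_assoc ((S₁ : ℝ) * S₂ - 1), ← mul_sum,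
    sum_filter_prod_mul_prod hQ₁ hQ₂]
  rw [sum_comm]
  simp only [sum_comm (s := univ.filter fun ω : (Fin S₁ → Λ₁) × (Fin S₂ → Λ₂) =>
    ω.1 s₁ = a ∧ ω.2 s₂ = b)]
  simp only [sum_filter_mul_prod_erase_mul_prod_erase hQ₁ hQ₂ (hmarg1 _ _) (hmarg2 _ _),
    sum_sum_ite_eq_and_eq, Fintype.card_fin, add_sub_cancel_right]

theorem muB_normalized_and_marginals_general
    {Λ₁ Λ₂ : Type*} [Fintype Λ₁] [Fintype Λ₂] [DecidableEq Λ₁] [DecidableEq Λ₂]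
    {S₁ S₂ : ℕ} (hS₁ : 1 ≤ S₁) (hS₂ : 1 ≤ S₂)
    (P : Fin S₁ → Fin S₂ → Λ₁ → Λ₂ → ℝ)
    (Q₁ : Fin S₁ → Λ₁ → ℝ) (Q₂ : Fin S₂ → Λ₂ → ℝ)
    (hnorm : ∀ s₁ s₂, ∑ a, ∑ b, P s₁ s₂ a b = 1)
    (hmarg1 : ∀ s₁ s₂ a, ∑ b, P s₁ s₂ a b = Q₁ s₁ a)
    (hmarg2 : ∀ s₁ s₂ b, ∑ a, P s₁ s₂ a b = Q₂ s₂ b) :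
    (∑ ω, muB P Q₁ Q₂ ω) = 1 ∧
    ∀ s₁ s₂ a b,
      (∑ ω ∈ Finset.univ.filter (fun ω : (Fin S₁ → Λ₁) × (Fin S₂ → Λ₂) =>
          ω.1 s₁ = a ∧ ω.2 s₂ = b), muB P Q₁ Q₂ ω) = P s₁ s₂ a b := by
  let e₁ : Fin S₁ := ⟨0, hS₁⟩
  let e₂ : Fin S₂ := ⟨0, hS₂⟩
  have hQ₁ : ∀ t, ∑ x, Q₁ t x = 1 := fun t => by simp_rw [← hmarg1 t e₂, hnorm]
  have hQ₂ : ∀ t, ∑ y, Q₂ t y = 1 := fun t => by rw [← hnorm e₁ t, sum_comm]; simp_rw [hmarg2]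
  have hmarginal := sum_filter_muB hQ₁ hQ₂ hmarg1 hmarg2
  refine ⟨?_, hmarginal⟩
  rw [← sum_fiberwise univ (fun ω => (ω.1 e₁, ω.2 e₂)), Fintype.sum_prod_type]
  simp only [Prod.mk.injEq, hmarginal, hnorm]

/-- the explicit measure (B3) sums to 1 and returns all scenario
distributions as the corresponding marginals. -/
theorem muB_normalized_and_marginals
    {Λ₁ Λ₂ : Type*} [Fintype Λ₁] [Fintype Λ₂] [DecidableEq Λ₁] [DecidableEq Λ₂]
    [Nonempty Λ₁] [Nonempty Λ₂] {S₁ S₂ : ℕ} (hS₁ : 1 ≤ S₁) (hS₂ : 1 ≤ S₂)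
    (P : Fin S₁ → Fin S₂ → Λ₁ → Λ₂ → ℝ)
    (Q₁ : Fin S₁ → Λ₁ → ℝ) (Q₂ : Fin S₂ → Λ₂ → ℝ)
    (hpos : ∀ s₁ s₂ a b, 0 ≤ P s₁ s₂ a b)
    (hnorm : ∀ s₁ s₂, ∑ a, ∑ b, P s₁ s₂ a b = 1)
    (hmarg1 : ∀ s₁ s₂ a, ∑ b, P s₁ s₂ a b = Q₁ s₁ a)
    (hmarg2 : ∀ s₁ s₂ b, ∑ a, P s₁ s₂ a b = Q₂ s₂ b) :
    (∑ ω, muB P Q₁ Q₂ ω) = 1 ∧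
    ∀ s₁ s₂ a b,
      (∑ ω ∈ Finset.univ.filter (fun ω : (Fin S₁ → Λ₁) × (Fin S₂ → Λ₂) =>
          ω.1 s₁ = a ∧ ω.2 s₂ = b), muB P Q₁ Q₂ ω) = P s₁ s₂ a b :=
  muB_normalized_and_marginals_general hS₁ hS₂ P Q₁ Q₂ hnorm hmarg1 hmarg2
end

section
/- Let Λ₁,…,Λ_N be finite nonempty sets with Sₙ ≥ 1 settings per site. A family of probability distributions P_{(s₁,…,s_N)} on Λ₁ × ⋯ × Λ_N admits a deterministic LqHV model if and only if it satisfies the general nonsignaling (consistency) condition: for every nonempty subset {n₁<…<n_M} of {1,…,N} and any two setting tuples s, s′ with s_{nⱼ} = s′_{nⱼ} for all j, the marginals of P_s and P_{s′} onto coordinates n₁,…,n_M coincide. -/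
/-!
A deterministic model makes the marginal of `P s` on the sites `M` equal to the weight of the
hidden variables whose responses to the settings `s n`, `n ∈ M`, are prescribed; this involves
the settings on `M` only, hence nonsignaling.

Conversely, take for `Ω` all families of local response functions `ωₙ : Sₙ → Λₙ` and
`ν ω = ∑_{t,y} P t y ∏ₙ φ_{tₙ,yₙ}(ωₙ)`, where `φ_{t,y}` is the product measure that is the point
mass at `y` in coordinate `t` and uniform elsewhere, minus `(1 - 1/Sₙ)` times the uniform measure.
The law of `ωₙ(sₙ)` under `φ_{t,y}` is `[t = sₙ][y = ·] + bₙ(t)` with `∑_t bₙ(t) = 0`. Expanding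
the product over the sites, every term only sees a marginal of `P t` on sites where `t` agrees
with `s`, so nonsignaling lets one replace `P t` by `P s`; summing over `t` then kills the `bₙ`.
-/

open Finset

section ProductSums

variable {R : Type*} [CommSemiring R] {ι : Type*} [Fintype ι] [DecidableEq ι]

theorem sum_filter_forall_prod {α : ι → Type*} [∀ i, Fintype (α i)]
    (p : ∀ i, α i → Prop) [∀ i, DecidablePred (p i)] (f : ∀ i, α i → R) :
    ∑ a ∈ univ.filter (fun a : ∀ i, α i => ∀ i, p i (a i)), ∏ i, f i (a i) =
      ∏ i, ∑ b ∈ univ.filter (p i), f i b := by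
  rw [prod_univ_sum]
  congr 1
  ext a
  simp [Fintype.mem_piFinset]

theorem sum_filter_apply_prod_of_sum_eq_one {σ α : Type*} [Fintype σ] [DecidableEq σ] [Fintype α]
    [DecidableEq α] (μ : σ → α → R) (hμ : ∀ u, ∑ a, μ u a = 1) (s : σ) (x : α) :
    ∑ g ∈ univ.filter (fun g : σ → α => g s = x), ∏ u, μ u (g u) = μ s x := by
  have hfilter : univ.filter (fun g : σ → α => g s = x) =
      univ.filter (fun g : σ → α => ∀ u, u = s → g u = x) := by
    ext g; simp
  rw [hfilter, sum_filter_forall_prod (fun u a => u = s → a = x),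
    prod_eq_single s (fun u _ hu => by simp [hu, hμ]) (by simp)]
  simp [filter_eq']

theorem sum_mul_prod_mul_add {κ : Type*} [Fintype κ] (p : κ → R) (a c : ι → R) (β : ι → κ → R) :
    ∑ y, p y * ∏ n, (a n * β n y + c n) =
      ∑ C ∈ univ.powerset, (∏ n ∈ C, a n) * (∏ n ∈ univ \ C, c n) *
        ∑ y, p y * ∏ n ∈ C, β n y := by
  simp_rw [prod_add, mul_sum]
  rw [sum_comm]
  refine sum_congr rfl fun C _ => sum_congr rfl fun y _ => ?_
  rw [prod_mul_distrib]
  ring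

end ProductSums

section SiteWeight

variable {σ α : Type*} [Fintype σ] [DecidableEq σ] [Fintype α] [DecidableEq α]

noncomputable def siteWeight (t : σ) (y : α) (g : σ → α) : ℝ :=
  ∏ u, (if u = t then (if g u = y then 1 else 0) else (Fintype.card α : ℝ)⁻¹) -
    (1 - (Fintype.card σ : ℝ)⁻¹) * ∏ _u : σ, (Fintype.card α : ℝ)⁻¹

theorem sum_filter_siteWeight [Nonempty σ] [Nonempty α] (t : σ) (y : α) (s : σ) (x : α) :
    ∑ g ∈ univ.filter (fun g : σ → α => g s = x), siteWeight t y g =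
      (if t = s then 1 else 0) * (if y = x then 1 else 0) +
        (((Fintype.card σ : ℝ) * Fintype.card α)⁻¹ -
          if t = s then (Fintype.card α : ℝ)⁻¹ else 0) := by
  have hK : (Fintype.card α : ℝ) ≠ 0 := by positivity
  simp only [siteWeight, sum_sub_distrib, ← mul_sum]
  rw [sum_filter_apply_prod_of_sum_eq_one
      (fun u a => if u = t then (if a = y then 1 else 0) else (Fintype.card α : ℝ)⁻¹)
      (fun u => by split_ifs <;> simp [hK]),
    sum_filter_apply_prod_of_sum_eq_one (fun _ _ => (Fintype.card α : ℝ)⁻¹) (fun u => by simp [hK])]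
  simp only [eq_comm (a := s), eq_comm (a := x)]
  split_ifs <;> field_simp <;> ring

end SiteWeight

section Models

variable {ι : Type*} [Fintype ι] {σ : ι → Type*} {Λ : ι → Type*} [∀ n, DecidableEq (Λ n)]

def IsDeterministicModel {Ω : Type*} [Fintype Ω] (P : (∀ n, σ n) → (∀ n, Λ n) → ℝ)
    (ν : Ω → ℝ) (f : ∀ n, σ n → Ω → Λ n) : Prop :=
  ∑ ω, ν ω = 1 ∧
    ∀ s x, P s x = ∑ ω ∈ univ.filter (fun ω => ∀ n, f n (s n) ω = x n), ν ω

theorem sum_fiberwise_pi_eq_sum_filter {Ω : Type*} [Fintype Ω] (F : Ω → ∀ n, Λ n)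
    (T : Finset (∀ n, Λ n)) (ν : Ω → ℝ) :
    ∑ x ∈ T, ∑ ω ∈ univ.filter (fun ω => ∀ n, F ω n = x n), ν ω =
      ∑ ω ∈ univ.filter (fun ω => F ω ∈ T), ν ω := by
  simp_rw [← funext_iff]
  exact sum_fiberwise_eq_sum_filter _ _ _ _

section
variable {Ω : Type*} [Fintype Ω] {P : (∀ n, σ n) → (∀ n, Λ n) → ℝ} {ν : Ω → ℝ}
  {f : ∀ n, σ n → Ω → Λ n}

theorem IsDeterministicModel.comp_equiv (h : IsDeterministicModel P ν f) {Ω' : Type*}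
    [Fintype Ω'] (e : Ω' ≃ Ω) : IsDeterministicModel P (ν ∘ e) (fun n t => f n t ∘ e) := by
  refine ⟨(e.sum_comp ν).trans h.1, fun s x => ?_⟩
  rw [h.2, sum_filter, sum_filter]
  exact (e.sum_comp _).symm

theorem isDeterministicModel_of_forall_eq [∀ n, Fintype (Λ n)] [DecidableEq ι] (s₀ : ∀ n, σ n)
    (hnorm : ∑ x, P s₀ x = 1)
    (h : ∀ s x, P s x = ∑ ω ∈ univ.filter (fun ω => ∀ n, f n (s n) ω = x n), ν ω) :
    IsDeterministicModel P ν f := by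
  refine ⟨?_, h⟩
  rw [← hnorm, sum_congr rfl fun x _ => h s₀ x,
    sum_fiberwise_pi_eq_sum_filter (fun ω n => f n (s₀ n) ω)]
  simp

end

variable [DecidableEq ι] [∀ n, Fintype (Λ n)]

def marginal (p : (∀ n, Λ n) → ℝ) (M : Finset ι) (y : ∀ n, Λ n) : ℝ :=
  ∑ x ∈ univ.filter (fun x : ∀ n, Λ n => ∀ n ∈ M, x n = y n), p x

def IsNonsignaling (P : (∀ n, σ n) → (∀ n, Λ n) → ℝ) : Prop :=
  ∀ M : Finset ι, M.Nonempty → ∀ s s' : ∀ n, σ n, (∀ n ∈ M, s n = s' n) →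
    ∀ y, marginal (P s) M y = marginal (P s') M y

theorem marginal_univ (p : (∀ n, Λ n) → ℝ) (y : ∀ n, Λ n) : marginal p univ y = p y := by
  simp [marginal, ← funext_iff, sum_filter]

theorem sum_mul_prod_ite_eq_marginal (p : (∀ n, Λ n) → ℝ) (M : Finset ι) (x : ∀ n, Λ n) :
    ∑ y, p y * ∏ n ∈ M, (if y n = x n then 1 else 0) = marginal p M x := by
  simp_rw [prod_boole, mul_boole, marginal, sum_filter]
  congr!

theorem IsDeterministicModel.marginal_eq {Ω : Type*} [Fintype Ω]
    {P : (∀ n, σ n) → (∀ n, Λ n) → ℝ} {ν : Ω → ℝ} {f : ∀ n, σ n → Ω → Λ n}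
    (h : IsDeterministicModel P ν f) (s : ∀ n, σ n) (M : Finset ι) (y : ∀ n, Λ n) :
    marginal (P s) M y = ∑ ω ∈ univ.filter (fun ω => ∀ n ∈ M, f n (s n) ω = y n), ν ω := by
  simp_rw [marginal, h.2 s]
  rw [sum_fiberwise_pi_eq_sum_filter (fun ω n => f n (s n) ω)]
  simp

theorem IsDeterministicModel.isNonsignaling {Ω : Type*} [Fintype Ω]
    {P : (∀ n, σ n) → (∀ n, Λ n) → ℝ} {ν : Ω → ℝ} {f : ∀ n, σ n → Ω → Λ n}
    (h : IsDeterministicModel P ν f) : IsNonsignaling P := by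
  intro M _ s s' hss' y
  rw [h.marginal_eq, h.marginal_eq]
  refine sum_congr (filter_congr fun ω _ => ?_) fun _ _ => rfl
  exact forall₂_congr fun n hn => by rw [hss' n hn]

theorem IsNonsignaling.marginal_eq {P : (∀ n, σ n) → (∀ n, Λ n) → ℝ} (hP : IsNonsignaling P)
    (hnorm : ∀ s, ∑ x, P s x = 1) {M : Finset ι} {s s' : ∀ n, σ n}
    (h : ∀ n ∈ M, s n = s' n) (y : ∀ n, Λ n) : marginal (P s) M y = marginal (P s') M y := by
  rcases M.eq_empty_or_nonempty with rfl | hM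
  · simp [marginal, hnorm]
  · exact hP M hM s s' h y

variable [∀ n, DecidableEq (σ n)]

theorem IsNonsignaling.sum_mul_prod_eq {P : (∀ n, σ n) → (∀ n, Λ n) → ℝ}
    (hP : IsNonsignaling P) (hnorm : ∀ s, ∑ x, P s x = 1) (s t : ∀ n, σ n) (x : ∀ n, Λ n)
    (b : ∀ n, σ n → ℝ) :
    ∑ y, P t y * ∏ n, ((if t n = s n then 1 else 0) * (if y n = x n then 1 else 0) + b n (t n)) =
      ∑ y, P s y * ∏ n, ((if t n = s n then 1 else 0) * (if y n = x n then 1 else 0) +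
        b n (t n)) := by
  simp_rw [sum_mul_prod_mul_add, sum_mul_prod_ite_eq_marginal]
  refine sum_congr rfl fun C _ => ?_
  by_cases hC : ∀ n ∈ C, t n = s n
  · rw [hP.marginal_eq hnorm hC]
  · simp [prod_boole, hC]

variable [∀ n, Fintype (σ n)]

theorem IsNonsignaling.sum_sum_mul_prod_eq {P : (∀ n, σ n) → (∀ n, Λ n) → ℝ}
    (hP : IsNonsignaling P) (hnorm : ∀ s, ∑ x, P s x = 1) (s : ∀ n, σ n) (x : ∀ n, Λ n)
    (b : ∀ n, σ n → ℝ) (hb : ∀ n, ∑ u, b n u = 0) :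
    ∑ t, ∑ y, P t y * ∏ n, ((if t n = s n then 1 else 0) * (if y n = x n then 1 else 0) +
      b n (t n)) = P s x := by
  calc _ = ∑ t, ∑ y, P s y * ∏ n, ((if t n = s n then 1 else 0) * (if y n = x n then 1 else 0) +
          b n (t n)) := sum_congr rfl fun t _ => hP.sum_mul_prod_eq hnorm s t x b
    _ = ∑ y, P s y * ∏ n, ∑ u, ((if u = s n then 1 else 0) * (if y n = x n then 1 else 0) +
          b n u) := by
        rw [sum_comm]
        simp_rw [← mul_sum, Fintype.prod_sum]
    _ = ∑ y, P s y * ∏ n ∈ univ, (if y n = x n then 1 else 0) := by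
        simp [sum_add_distrib, hb]
    _ = P s x := by rw [sum_mul_prod_ite_eq_marginal, marginal_univ]

noncomputable def quasiWeight (P : (∀ n, σ n) → (∀ n, Λ n) → ℝ) (ω : ∀ n, σ n → Λ n) : ℝ :=
  ∑ t, ∑ y, P t y * ∏ n, siteWeight (t n) (y n) (ω n)

theorem IsNonsignaling.eq_sum_filter_quasiWeight [∀ n, Nonempty (σ n)] [∀ n, Nonempty (Λ n)]
    {P : (∀ n, σ n) → (∀ n, Λ n) → ℝ} (hP : IsNonsignaling P) (hnorm : ∀ s, ∑ x, P s x = 1)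
    (s : ∀ n, σ n) (x : ∀ n, Λ n) :
    P s x = ∑ ω ∈ univ.filter (fun ω : ∀ n, σ n → Λ n => ∀ n, ω n (s n) = x n),
      quasiWeight P ω := by
  symm
  calc _ = ∑ t, ∑ y, P t y * ∏ n, ∑ g ∈ univ.filter (fun g : σ n → Λ n => g (s n) = x n),
          siteWeight (t n) (y n) g := by
        simp_rw [quasiWeight]
        rw [sum_comm]
        refine sum_congr rfl fun t _ => ?_
        rw [sum_comm]
        refine sum_congr rfl fun y _ => ?_
        rw [← mul_sum, sum_filter_forall_prod (fun n g => g (s n) = x n)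
          (fun n g => siteWeight (t n) (y n) g)]
    _ = P s x := by
        simp_rw [sum_filter_siteWeight]
        refine hP.sum_sum_mul_prod_eq hnorm s x (fun n u => ((Fintype.card (σ n) : ℝ) *
          Fintype.card (Λ n))⁻¹ - if u = s n then (Fintype.card (Λ n) : ℝ)⁻¹ else 0) fun n => ?_
        have hm : (Fintype.card (σ n) : ℝ) ≠ 0 := by positivity
        simp only [sum_sub_distrib, sum_const, card_univ, nsmul_eq_mul, mul_inv,
          mul_inv_cancel_left₀ hm, sum_ite_eq', mem_univ, if_true, sub_self]

theorem IsNonsignaling.isDeterministicModel_quasiWeight [∀ n, Nonempty (σ n)]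
    [∀ n, Nonempty (Λ n)] {P : (∀ n, σ n) → (∀ n, Λ n) → ℝ} (hP : IsNonsignaling P)
    (hnorm : ∀ s, ∑ x, P s x = 1) :
    IsDeterministicModel P (quasiWeight P) (fun n t ω => ω n t) :=
  isDeterministicModel_of_forall_eq (fun _ => Classical.arbitrary _) (hnorm _)
    (hP.eq_sum_filter_quasiWeight hnorm)

end Models

theorem deterministic_lqhv_iff_nonsignaling_general
    {N : ℕ} {S : Fin N → ℕ} (hS : ∀ n, 1 ≤ S n) {Λ : Fin N → Type*}
    [∀ n, Fintype (Λ n)] [∀ n, DecidableEq (Λ n)] [∀ n, Nonempty (Λ n)]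
    (P : (∀ n, Fin (S n)) → (∀ n, Λ n) → ℝ)
    (hnorm : ∀ s, ∑ x, P s x = 1) :
    (∃ (Ω : Type) (_ : Fintype Ω) (_ : DecidableEq Ω) (ν : Ω → ℝ)
        (f : ∀ n, Fin (S n) → Ω → Λ n),
      (∑ ω, ν ω) = 1 ∧
      ∀ (s : ∀ n, Fin (S n)) (x : ∀ n, Λ n),
        P s x = ∑ ω ∈ Finset.univ.filter (fun ω : Ω => ∀ n, f n (s n) ω = x n), ν ω)
    ↔
    (∀ (M : Finset (Fin N)), M.Nonempty →
      ∀ (s s' : ∀ n, Fin (S n)), (∀ n ∈ M, s n = s' n) →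
      ∀ y : ∀ n, Λ n,
        (∑ x ∈ Finset.univ.filter (fun x : ∀ n, Λ n => ∀ n ∈ M, x n = y n), P s x)
          = ∑ x ∈ Finset.univ.filter (fun x : ∀ n, Λ n => ∀ n ∈ M, x n = y n), P s' x) := by
  have : ∀ n, Nonempty (Fin (S n)) := fun n => ⟨⟨0, hS n⟩⟩
  have key : (∃ (Ω : Type) (_ : Fintype Ω) (_ : DecidableEq Ω) (ν : Ω → ℝ)
      (f : ∀ n, Fin (S n) → Ω → Λ n), IsDeterministicModel P ν f) ↔ IsNonsignaling P := by
    refine ⟨fun ⟨_, _, _, _, _, hmodel⟩ => hmodel.isNonsignaling, fun hP => ?_⟩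
    exact ⟨_, inferInstance, inferInstance, _, _,
      (hP.isDeterministicModel_quasiWeight hnorm).comp_equiv (Fintype.equivFin _).symm⟩
  -- `congr!` reconciles decidability instances: the definitions decide `∀ n : ι` for a general
  -- fintype, the statement with the instances specific to `Fin N`.
  convert key using 0
  simp only [IsDeterministicModel, IsNonsignaling, marginal]
  congr!

/-- Theorem 1 of Loubenets, finite version: a multipartite family
of scenario distributions admits a deterministic LqHV model iff it satisfies the
general nonsignaling (consistency) condition. -/
theorem deterministic_lqhv_iff_nonsignaling
    {N : ℕ} {S : Fin N → ℕ} (hS : ∀ n, 1 ≤ S n) {Λ : Fin N → Type*}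
    [∀ n, Fintype (Λ n)] [∀ n, DecidableEq (Λ n)] [∀ n, Nonempty (Λ n)]
    (P : (∀ n, Fin (S n)) → (∀ n, Λ n) → ℝ)
    (hpos : ∀ s x, 0 ≤ P s x) (hnorm : ∀ s, ∑ x, P s x = 1) :
    (∃ (Ω : Type) (_ : Fintype Ω) (_ : DecidableEq Ω) (ν : Ω → ℝ)
        (f : ∀ n, Fin (S n) → Ω → Λ n),
      (∑ ω, ν ω) = 1 ∧
      ∀ (s : ∀ n, Fin (S n)) (x : ∀ n, Λ n),
        P s x = ∑ ω ∈ Finset.univ.filter (fun ω : Ω => ∀ n, f n (s n) ω = x n), ν ω)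
    ↔
    (∀ (M : Finset (Fin N)), M.Nonempty →
      ∀ (s s' : ∀ n, Fin (S n)), (∀ n ∈ M, s n = s' n) →
      ∀ y : ∀ n, Λ n,
        (∑ x ∈ Finset.univ.filter (fun x : ∀ n, Λ n => ∀ n ∈ M, x n = y n), P s x)
          = ∑ x ∈ Finset.univ.filter (fun x : ∀ n, Λ n => ∀ n ∈ M, x n = y n), P s' x) :=
  deterministic_lqhv_iff_nonsignaling_general hS P hnorm
end
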